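/- Assume in addition that the Weierstrass equation has no F_q-rational affine solutions, i.e. Y² + a₁XY + a₃Y ≠ X³ + a₂X² + a₄X + a₆ for all X, Y ∈ F_q. Then every α ∈ O_∞ is (−4)-approximable: there exists a sequence f_n/g_n with f_n, g_n ∈ A, g_n ≠ 0, f_nA + g_nA = A, |α − f_n/g_n| < q⁴/|g_n|² for all n, and f_n/g_n → α in K_∞. (Case (1) of Example 8.7 of the paper: for an elliptic curve without rational affine points the quotient graph has center of diameter 4, and N = 1, so Theorem 1.4 gives the bound −4.) -/

import Mathlib

open Filter Polynomial MeasureTheory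
open scoped Multiplicative

notation "ℤₘ₀" => WithZero (Multiplicative ℤ)

/-- The real absolute value attached to a `ℤₘ₀`-valued valuation with base `q`:
`Multiplicative.ofAdd n ↦ q ^ n` and `0 ↦ 0`. -/
noncomputable def zabs (q : ℕ) (x : ℤₘ₀) : ℝ :=
  if hx : x = 0 then 0 else (q : ℝ) ^ Multiplicative.toAdd (WithZero.unzero hx)

/-!
Write `A = F_q[x, y]` for the coordinate ring. Comparing valuations in
`y (y + a₁ x + a₃) = x³ + a₂ x² + a₄ x + a₆` gives `ν y ^ 2 = ν x ^ 3`, and since `ν` is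
surjective this forces `ν x = exp 2` and `ν y = exp 3`. So every pole order `k ≥ 2` is attained in
`A`, and the elements `p(x) + s(x) y` with `2 deg p ≤ D` and `2 deg s + 3 ≤ D` are `q ^ D` elements
of pole order at most `D`. As the residue field is `F_q`, the first fact gives
`K = A + {ν ≤ exp 1}`, and a pigeonhole argument on the first `n + 2` "digits" of `g z` modulo
`A`, with `g` running over the second set for `D = n + 3`, gives `f, g` with `ν g ≤ exp (n + 3)`
and `ν (g z - f) ≤ exp (-(n + 1))`.

To make `f` and `g` coprime, `A` must be a principal ideal domain. If an ideal is not generated by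
an element `b` of least pole order, it contains an `r ∉ (b)` of pole order one more; then every
`z r` is congruent to a constant multiple of `r` modulo `b`, so `A / ((b) : r) ≅ F_q`, an affine
rational point. Finally `α ∈ K_∞` is approximated by an element `z ∈ K`.
-/

open WithZero Topology

lemma zabs_zero (q : ℕ) : zabs q 0 = 0 := dif_pos rfl

lemma zabs_exp (q : ℕ) (k : ℤ) : zabs q (exp k) = (q : ℝ) ^ k := by
  simp [zabs, exp]

lemma zabs_strictMono {q : ℕ} (hq : 1 < q) : StrictMono (zabs q) := by
  intro a b hab
  rw [← exp_log (ne_bot_of_gt hab), zabs_exp]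
  rcases eq_or_ne a 0 with rfl | ha
  · rw [zabs_zero]; positivity
  · rw [← exp_log ha, zabs_exp]
    exact zpow_lt_zpow_right₀ (by exact_mod_cast hq) ((log_lt_log ha (ne_bot_of_gt hab)).2 hab)

noncomputable def zabsHom {q : ℕ} (hq : q ≠ 0) : ℤₘ₀ →*₀ ℝ where
  toFun := zabs q
  map_zero' := zabs_zero q
  map_one' := by simpa using zabs_exp q 0
  map_mul' a b := by
    rcases eq_or_ne a 0 with rfl | ha
    · simp [zabs_zero]
    rcases eq_or_ne b 0 with rfl | hb
    · simp [zabs_zero]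
    rw [← exp_log ha, ← exp_log hb, ← exp_add, zabs_exp, zabs_exp, zabs_exp,
      zpow_add₀ (by exact_mod_cast hq)]

lemma zabs_div_pow {q : ℕ} (hq : q ≠ 0) (a b : ℤₘ₀) (n : ℕ) :
    zabs q (a / b ^ n) = zabs q a / zabs q b ^ n :=
  (map_div₀ (zabsHom hq) a (b ^ n)).trans (by rw [map_pow]; rfl)

lemma Valued.setOf_sub_lt_mem_nhds {R Γ₀ : Type*} [Ring R] [LinearOrderedCommGroupWithZero Γ₀]
    [Valued R Γ₀] (a : R) {x : R} (hx : Valued.v x ≠ 0) :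
    {y | Valued.v (y - a) < Valued.v x} ∈ 𝓝 a :=
  Valued.mem_nhds.2 ⟨Units.mk0 _ ((Valued.v.restrict_eq_zero_iff).not.2 hx),
    fun _ hy ↦ (Valued.v.restrict_lt_iff).1 hy⟩

lemma Valued.tendsto_of_le_exp_neg {R : Type*} [Ring R] [Valued R ℤₘ₀] {u : ℕ → R} {a : R}
    (h : ∀ n : ℕ, Valued.v (u n - a) ≤ exp (-(n : ℤ))) : Tendsto u atTop (𝓝 a) := by
  refine tendsto_atTop'.2 fun s hs ↦ ?_
  obtain ⟨γ, hγ⟩ := Valued.mem_nhds.1 hs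
  obtain ⟨N, hN⟩ := exists_exp_neg_natCast_lt
    (MonoidWithZeroHom.ValueGroup₀.embedding_unit_ne_zero γ)
  refine ⟨N, fun n hn ↦ hγ (Valued.v.restrict_lt_iff_lt_embedding.2 ?_)⟩
  exact (h n).trans_lt ((exp_le_exp.2 (by omega)).trans_lt hN)

lemma Valued.exists_coe_sub_lt {K Γ₀ : Type*} [Field K] [LinearOrderedCommGroupWithZero Γ₀]
    [Valued K Γ₀] (α : UniformSpace.Completion K) {x : K} (hx : Valued.v x ≠ 0) :
    ∃ z : K, Valued.v (α - z) < Valued.v x := by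
  have hx' : Valued.v (x : UniformSpace.Completion K) ≠ 0 := by
    rwa [Valued.valuedCompletion_apply]
  obtain ⟨z, hz⟩ := UniformSpace.Completion.denseRange_coe.mem_nhds
    (Valued.setOf_sub_lt_mem_nhds α hx')
  refine ⟨z, ?_⟩
  rw [Valuation.map_sub_swap, ← Valued.valuedCompletion_apply x]
  exact hz

theorem Valuation.exists_sub_mul_lt_of_card_residueField {F K Γ₀ : Type*} [Field F] [Finite F]
    [Field K] [Algebra F K] [LinearOrderedCommGroupWithZero Γ₀] (v : Valuation K Γ₀)
    (hres : Nat.card (IsLocalRing.ResidueField v.valuationSubring) = Nat.card F)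
    {x y : K} (hy : y ≠ 0) (hxy : v x ≤ v y) :
    ∃ c : F, v (x - algebraMap F K c * y) < v y := by
  set O := v.valuationSubring
  let φ : F →+* O := (algebraMap F K).codRestrict O
    fun c ↦ (v.mem_valuationSubring_iff _).2 (IsTrivialOn.valuation_algebraMap_le_one v c)
  have : Finite (IsLocalRing.ResidueField O) := Nat.finite_of_card_ne_zero (by
    rw [hres]; exact Nat.card_pos.ne')
  have hbij : Function.Bijective ((IsLocalRing.residue O).comp φ) :=
    (RingHom.injective _).bijective_of_nat_card_le hres.le
  have hvy : v y ≠ 0 := (map_ne_zero v).2 hy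
  have hz : x / y ∈ O := (v.mem_valuationSubring_iff _).2 (by
    rw [map_div₀, div_le_one₀ (zero_lt_iff.2 hvy)]; exact hxy)
  obtain ⟨c, hc⟩ := hbij.2 (IsLocalRing.residue O ⟨x / y, hz⟩)
  have hmax : ⟨x / y, hz⟩ - φ c ∈ IsLocalRing.maximalIdeal O := by
    rw [← IsLocalRing.residue_eq_zero_iff, _root_.map_sub, ← RingHom.comp_apply, hc, sub_self]
  refine ⟨c, ?_⟩
  calc v (x - algebraMap F K c * y) = v (x / y - algebraMap F K c) * v y := by
        rw [← map_mul, sub_mul, div_mul_cancel₀ _ hy]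
    _ < v y := mul_lt_of_lt_one_left (zero_lt_iff.2 hvy) ((v.mem_maximalIdeal_iff K).1 hmax)

lemma WithZero.le_exp_of_lt_exp_add_one {x : ℤₘ₀} {n : ℤ} (h : x < exp (n + 1)) : x ≤ exp n :=
  (lt_mul_exp_iff_le exp_ne_zero).1 (by rwa [← exp_add])

theorem IsBezout.exists_eq_mul_eq_mul_span_eq_top {R : Type*} [CommRing R] [IsDomain R]
    [IsBezout R] (f₀ : R) {g₀ : R} (hg₀ : g₀ ≠ 0) :
    ∃ d f g : R, f₀ = d * f ∧ g₀ = d * g ∧ Ideal.span {f, g} = ⊤ := by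
  obtain ⟨f, hf⟩ := IsBezout.gcd_dvd_left f₀ g₀
  obtain ⟨g, hg⟩ := IsBezout.gcd_dvd_right f₀ g₀
  obtain ⟨u, w, huw⟩ := IsBezout.gcd_eq_sum f₀ g₀
  have hd : IsBezout.gcd f₀ g₀ ≠ 0 := by
    rintro h
    rw [h, zero_mul] at hg
    exact hg₀ hg
  refine ⟨_, f, g, hf, hg, (Ideal.eq_top_iff_one _).2 (Ideal.mem_span_pair.2 ⟨u, w, ?_⟩)⟩
  exact mul_left_cancel₀ hd (by linear_combination huw - u * hf - w * hg)

theorem nonempty_algHom_of_forall_exists_sub_mem {F A : Type*} [Field F] [CommRing A]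
    [Algebra F A] {J : Ideal A} (hJ : J ≠ ⊤) (h : ∀ z : A, ∃ c : F, z - algebraMap F A c ∈ J) :
    Nonempty (A →ₐ[F] F) := by
  have : Nontrivial (A ⧸ J) := Ideal.Quotient.nontrivial_iff.2 hJ
  have hbij : Function.Bijective (Algebra.ofId F (A ⧸ J)) := by
    refine ⟨(Algebra.ofId F (A ⧸ J)).toRingHom.injective, fun z ↦ ?_⟩
    obtain ⟨z, rfl⟩ := Ideal.Quotient.mk_surjective z
    obtain ⟨c, hc⟩ := h z
    exact ⟨c, (Ideal.Quotient.eq.2 hc).symm⟩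
  exact ⟨((AlgEquiv.ofBijective _ hbij).symm : A ⧸ J →ₐ[F] F).comp (Ideal.Quotient.mkₐ F J)⟩

section GapOne

variable {F A K : Type*} [Field F] [Finite F] [CommRing A] [Algebra F A] [Field K] [Algebra A K]
  [Algebra F K] [IsScalarTower F A K] {ν : Valuation K ℤₘ₀}
  (hres : Nat.card (IsLocalRing.ResidueField ν.valuationSubring) = Nat.card F)
  (hgap : ∀ k : ℕ, 2 ≤ k → ∃ a : A, ν (algebraMap A K a) = exp (k : ℤ))
  (hsurj : Function.Surjective ν)

include hres hgap in
theorem exists_valuation_sub_algebraMap_le_exp_one (z : K) :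
    ∃ a : A, ν (z - algebraMap A K a) ≤ exp 1 := by
  suffices H : ∀ n : ℕ, ∀ z : K, ν z ≤ exp (n : ℤ) → ∃ a : A, ν (z - algebraMap A K a) ≤ exp 1
    from H _ z (le_exp_of_log_le (Int.self_le_toNat _))
  intro n
  induction n with
  | zero => exact fun z hz ↦ ⟨0, by simpa using hz.trans (exp_le_exp.2 zero_le_one)⟩
  | succ n ih =>
    intro z hz
    rcases Nat.lt_or_ge n 1 with hn | hn
    · exact ⟨0, by simpa using hz.trans (exp_le_exp.2 (by omega))⟩
    obtain ⟨m, hm⟩ := hgap (n + 1) (by omega)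
    have hm0 : algebraMap A K m ≠ 0 := by
      rintro h
      rw [h, map_zero] at hm
      exact exp_ne_zero hm.symm
    obtain ⟨c, hc⟩ := ν.exists_sub_mul_lt_of_card_residueField hres hm0 (hz.trans_eq hm.symm)
    rw [hm, Nat.cast_succ] at hc
    obtain ⟨a, ha⟩ := ih _ (le_exp_of_lt_exp_add_one hc)
    refine ⟨algebraMap F A c * m + a, ?_⟩
    rwa [map_add, map_mul, ← IsScalarTower.algebraMap_apply, ← sub_sub]

include hres hgap in
theorem exists_valuation_sub_mul_le [IsFractionRing A K] (a : A) {b : A} (hb : b ≠ 0) :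
    ∃ s : A, ν (algebraMap A K (a - s * b)) ≤ ν (algebraMap A K b) * exp 1 := by
  have hb' : algebraMap A K b ≠ 0 := (map_ne_zero_iff _ (IsFractionRing.injective A K)).2 hb
  obtain ⟨s, hs⟩ := exists_valuation_sub_algebraMap_le_exp_one hres hgap
    (algebraMap A K a / algebraMap A K b)
  refine ⟨s, ?_⟩
  calc ν (algebraMap A K (a - s * b))
      = ν (algebraMap A K a / algebraMap A K b - algebraMap A K s) * ν (algebraMap A K b) := by
        rw [← map_mul, sub_mul, div_mul_cancel₀ _ hb', map_sub, map_mul]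
    _ ≤ ν (algebraMap A K b) * exp 1 := by rw [mul_comm]; exact mul_le_mul_right hs _

include hres hsurj in
theorem exists_ne_valuation_sub_le {ι : Type*} {N : ℕ} {s : Finset ι}
    (hs : Nat.card F ^ N < s.card) {x : ι → K} {k : ℤ} (hx : ∀ i ∈ s, ν (x i) ≤ exp k) :
    ∃ i ∈ s, ∃ j ∈ s, i ≠ j ∧ ν (x i - x j) ≤ exp (k - N) := by
  classical
  induction N generalizing s x k with
  | zero =>
    obtain ⟨i, hi, j, hj, hij⟩ := Finset.one_lt_card.1 (by simpa using hs)
    exact ⟨i, hi, j, hj, hij, by simpa using (ν.map_sub _ _).trans (max_le (hx i hi) (hx j hj))⟩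
  | succ N ih =>
    obtain ⟨π, hπ⟩ := hsurj (exp k)
    have hπ0 : π ≠ 0 := by
      rintro rfl
      exact exp_ne_zero (hπ.symm.trans ν.map_zero)
    have digit : ∀ i ∈ s, ∃ c : F, ν (x i - algebraMap F K c * π) ≤ exp (k - 1) := by
      intro i hi
      obtain ⟨c, hc⟩ :=
        ν.exists_sub_mul_lt_of_card_residueField hres hπ0 ((hx i hi).trans_eq hπ.symm)
      exact ⟨c, le_exp_of_lt_exp_add_one (by rwa [sub_add_cancel, ← hπ])⟩
    choose! c hc using digit
    have := Fintype.ofFinite F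
    obtain ⟨c₀, -, hc₀⟩ := Finset.exists_lt_card_fiber_of_mul_lt_card_of_maps_to (f := c)
      (t := Finset.univ) (fun _ _ ↦ Finset.mem_univ _)
      (by rwa [Finset.card_univ, ← Nat.card_eq_fintype_card, ← pow_succ'])
    obtain ⟨i, hi, j, hj, hij, hle⟩ := ih hc₀ (x := fun i ↦ x i - algebraMap F K c₀ * π)
      (k := k - 1) fun i hi ↦ by
        obtain ⟨his, rfl⟩ := Finset.mem_filter.1 hi
        exact hc i his
    refine ⟨i, (Finset.mem_filter.1 hi).1, j, (Finset.mem_filter.1 hj).1, hij, ?_⟩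
    rw [sub_sub_sub_cancel_right] at hle
    exact hle.trans_eq (by push_cast; ring_nf)

include hres hgap hsurj in
theorem exists_ne_valuation_mul_sub_le (z : K) {S : Finset A} {N : ℕ}
    (hS : Nat.card F ^ N < S.card) :
    ∃ g₁ ∈ S, ∃ g₂ ∈ S, g₁ ≠ g₂ ∧
      ∃ f : A, ν (algebraMap A K (g₁ - g₂) * z - algebraMap A K f) ≤ exp (1 - (N : ℤ)) := by
  choose a ha using fun g : A ↦
    exists_valuation_sub_algebraMap_le_exp_one hres hgap (algebraMap A K g * z)
  obtain ⟨g₁, h₁, g₂, h₂, hne, hle⟩ := exists_ne_valuation_sub_le hres hsurj hS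
    (x := fun g ↦ algebraMap A K g * z - algebraMap A K (a g)) fun g _ ↦ ha g
  refine ⟨g₁, h₁, g₂, h₂, hne, a g₁ - a g₂, hle.trans_eq' ?_⟩
  simp only [map_sub]
  ring_nf

theorem exists_mem_ne_zero_forall_valuation_le
    (hpos : ∀ a : A, a ≠ 0 → 1 ≤ ν (algebraMap A K a)) {I : Ideal A} (hI : I ≠ ⊥) :
    ∃ b ∈ I, b ≠ 0 ∧ ∀ a ∈ I, a ≠ 0 → ν (algebraMap A K b) ≤ ν (algebraMap A K a) := by
  let f : A → ℕ := fun a ↦ (log (ν (algebraMap A K a))).toNat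
  have hne : {a | a ∈ I ∧ a ≠ 0}.Nonempty := (Submodule.ne_bot_iff I).1 hI
  set b := Function.argminOn f _ hne
  obtain ⟨hbI, hb⟩ : b ∈ {a | a ∈ I ∧ a ≠ 0} := Function.argminOn_mem f _ hne
  refine ⟨b, hbI, hb, fun a haI ha ↦ ?_⟩
  have hfab : (log (ν (algebraMap A K b))).toNat ≤ (log (ν (algebraMap A K a))).toNat :=
    Function.argminOn_le f _ (show a ∈ {a | a ∈ I ∧ a ≠ 0} from ⟨haI, ha⟩)
  have hb₀ := le_log_of_exp_le (hpos b hb)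
  have ha₀ := le_log_of_exp_le (hpos a ha)
  rw [← log_le_log (zero_lt_one.trans_le (hpos b hb)).ne' (zero_lt_one.trans_le (hpos a ha)).ne']
  omega

section Ideal

variable [IsFractionRing A K] {I : Ideal A} {b : A} (hbI : b ∈ I) (hb : b ≠ 0)
  (hmin : ∀ a ∈ I, a ≠ 0 → ν (algebraMap A K b) ≤ ν (algebraMap A K a))
include hres hbI hb hmin

theorem mem_span_singleton_of_valuation_le {w : A} (hwI : w ∈ I)
    (hw : ν (algebraMap A K w) ≤ ν (algebraMap A K b)) : w ∈ Ideal.span {b} := by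
  obtain ⟨c, hc⟩ := ν.exists_sub_mul_lt_of_card_residueField hres
    ((map_ne_zero_iff _ (IsFractionRing.injective A K)).2 hb) hw
  rw [IsScalarTower.algebraMap_apply F A K, ← map_mul, ← map_sub] at hc
  have h0 : w - algebraMap F A c * b = 0 := by
    by_contra h
    exact (hmin _ (I.sub_mem hwI (I.mul_mem_left _ hbI)) h).not_gt hc
  exact Ideal.mem_span_singleton'.2 ⟨algebraMap F A c, by linear_combination -h0⟩

include hgap in
theorem mem_span_singleton_of_valuation_le_mul_exp_one (hrat : IsEmpty (A →ₐ[F] F)) {r : A}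
    (hrI : r ∈ I) (hr : ν (algebraMap A K r) ≤ ν (algebraMap A K b) * exp 1) :
    r ∈ Ideal.span {b} := by
  have hνb : ν (algebraMap A K b) ≠ 0 :=
    (map_ne_zero ν).2 ((map_ne_zero_iff _ (IsFractionRing.injective A K)).2 hb)
  rcases hr.lt_or_eq with hlt | heq
  · exact mem_span_singleton_of_valuation_le hres hbI hb hmin hrI
      ((lt_mul_exp_iff_le hνb).1 hlt)
  by_contra hrb
  have hr0 : algebraMap A K r ≠ 0 := by
    rintro h
    rw [h, map_zero] at heq
    exact mul_ne_zero hνb exp_ne_zero heq.symm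
  have hcolon :
      ∀ z : A, ∃ c : F, z - algebraMap F A c ∈ (Ideal.span {b}).colon (Ideal.span {r}) := by
    intro z
    obtain ⟨s, hs⟩ := exists_valuation_sub_mul_le hres hgap (z * r) hb
    obtain ⟨c, hc⟩ := ν.exists_sub_mul_lt_of_card_residueField hres hr0 (hs.trans_eq heq.symm)
    rw [IsScalarTower.algebraMap_apply F A K, ← map_mul, ← map_sub, heq,
      lt_mul_exp_iff_le hνb] at hc
    have hmem := mem_span_singleton_of_valuation_le hres hbI hb hmin (I.sub_mem
      (I.sub_mem (I.mul_mem_left z hrI) (I.mul_mem_left s hbI)) (I.mul_mem_left _ hrI)) hc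
    refine ⟨c, Ideal.mem_colon_span_singleton.2 ?_⟩
    convert (Ideal.span {b}).add_mem hmem (Ideal.mem_span_singleton.2 (dvd_mul_left b s)) using 1
    ring
  have hJ : (Ideal.span {b}).colon (Ideal.span {r}) ≠ ⊤ := fun h ↦ hrb <| by
    simpa using Ideal.mem_colon_span_singleton.1 (h ▸ Submodule.mem_top : (1 : A) ∈ _)
  exact hrat.false (nonempty_algHom_of_forall_exists_sub_mem hJ hcolon).some

end Ideal

include hres hgap in
theorem isPrincipalIdealRing_of_isEmpty_algHom [IsFractionRing A K]
    (hpos : ∀ a : A, a ≠ 0 → 1 ≤ ν (algebraMap A K a)) (hrat : IsEmpty (A →ₐ[F] F)) :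
    IsPrincipalIdealRing A := by
  refine ⟨fun I ↦ ?_⟩
  rcases eq_or_ne I ⊥ with rfl | hI
  · exact bot_isPrincipal
  obtain ⟨b, hbI, hb, hmin⟩ := exists_mem_ne_zero_forall_valuation_le hpos hI
  refine ⟨b, le_antisymm (fun a haI ↦ ?_) ((Ideal.span_singleton_le_iff_mem I).2 hbI)⟩
  obtain ⟨s, hs⟩ := exists_valuation_sub_mul_le hres hgap a hb
  have := mem_span_singleton_of_valuation_le_mul_exp_one hres hgap hbI hb hmin hrat
    (I.sub_mem haI (I.mul_mem_left s hbI)) hs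
  simpa using (Ideal.span {b}).add_mem this (Ideal.mem_span_singleton.2 (dvd_mul_left b s))

end GapOne

theorem WithZero.exists_eq_exp_two_mul_and_eq_exp_three_mul {x y : ℤₘ₀} (hx : 1 < x)
    (h : y ^ 2 = x ^ 3) : ∃ t : ℤ, 0 < t ∧ x = exp (2 * t) ∧ y = exp (3 * t) := by
  have hx0 : x ≠ 0 := ne_bot_of_gt hx
  have hy0 : y ≠ 0 := by
    rintro rfl
    exact pow_ne_zero 3 hx0 (by simpa using h.symm)
  have hlog := congrArg log h
  rw [log_pow, log_pow, nsmul_eq_mul, nsmul_eq_mul] at hlog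
  have hpos : 0 < log x := lt_log_of_exp_lt hx
  refine ⟨log y - log x, by push_cast at hlog; omega, ?_, ?_⟩
  · exact (exp_log hx0).symm.trans (congrArg exp (by push_cast at hlog; omega))
  · exact (exp_log hy0).symm.trans (congrArg exp (by push_cast at hlog; omega))

namespace WeierstrassCurve.Affine.CoordinateRing

variable {R : Type*} [CommRing R] (W : WeierstrassCurve.Affine R)

lemma algebraMap_eq_aeval (p : R[X]) :
    algebraMap R[X] W.CoordinateRing p = aeval (algebraMap R[X] W.CoordinateRing X) p := by
  rw [aeval_algebraMap_apply, aeval_X_left_apply]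

lemma exists_eq_algebraMap_add_algebraMap_mul (a : W.CoordinateRing) :
    ∃ p s : R[X], a = algebraMap R[X] _ p + algebraMap R[X] _ s * mk W X := by
  obtain ⟨p, s, h⟩ := exists_smul_basis_eq a
  exact ⟨p, s, by rw [← h, Algebra.smul_def, Algebra.smul_def, mul_one]⟩

lemma eq_zero_of_algebraMap_add_algebraMap_mul_eq_zero {p s : R[X]}
    (h : algebraMap R[X] W.CoordinateRing p + algebraMap R[X] _ s * mk W X = 0) :
    p = 0 ∧ s = 0 :=
  smul_basis_eq_zero (by rwa [Algebra.smul_def, Algebra.smul_def, mul_one])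

lemma mk_X_mul_eq :
    mk W X * (mk W X + algebraMap R[X] _ (C W.a₁ * X + C W.a₃)) =
      algebraMap R[X] _ (X ^ 3 + C W.a₂ * X ^ 2 + C W.a₄ * X + C W.a₆) := by
  have h : mk W W.polynomial = 0 := AdjoinRoot.mk_self
  simp only [WeierstrassCurve.Affine.polynomial, map_sub, map_add, map_mul, map_pow] at h
  simp only [show ∀ p, algebraMap R[X] W.CoordinateRing p = mk W (C p) from fun _ ↦ rfl, map_add,
    map_mul, map_pow]
  linear_combination h

theorem equation_of_algHom (φ : W.CoordinateRing →ₐ[R] R) :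
    W.Equation (φ (algebraMap R[X] _ X)) (φ (mk W X)) := by
  have hC (c : R) : φ (algebraMap R[X] _ (C c)) = c := by
    rw [← Polynomial.algebraMap_eq, ← IsScalarTower.algebraMap_apply, AlgHom.commutes,
      Algebra.algebraMap_self, RingHom.id_apply]
  have h := congrArg φ (mk_X_mul_eq W)
  simp only [map_add, map_mul, map_pow, hC] at h
  rw [equation_iff]
  linear_combination h

end WeierstrassCurve.Affine.CoordinateRing

namespace WeierstrassCurve.Affine

variable {F : Type*} [Field F] [Finite F] {W : WeierstrassCurve.Affine F}
  {ν : Valuation W.FunctionField ℤₘ₀}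

local notation "𝔁" => algebraMap F[X] W.CoordinateRing X
local notation "𝔂" => CoordinateRing.mk W X
local notation "ι" => algebraMap W.CoordinateRing W.FunctionField

omit [Finite F] in
lemma algebraMap_algebraMap_eq_aeval (p : F[X]) :
    ι (algebraMap F[X] W.CoordinateRing p) = aeval (ι 𝔁) p := by
  rw [aeval_algebraMap_apply, ← CoordinateRing.algebraMap_eq_aeval]

omit [Finite F] in
lemma algebraMap_X_ne_algebraMap (c : F) : 𝔁 ≠ algebraMap F W.CoordinateRing c := by
  intro h
  refine X_sub_C_ne_zero c (CoordinateRing.eq_zero_of_algebraMap_add_algebraMap_mul_eq_zero W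
    (s := 0) ?_).1
  rw [map_sub, h, IsScalarTower.algebraMap_apply F F[X], Polynomial.algebraMap_eq]
  simp

omit [Finite F] in
lemma mk_X_ne_algebraMap (c : F) : 𝔂 ≠ algebraMap F W.CoordinateRing c := by
  intro h
  refine one_ne_zero (CoordinateRing.eq_zero_of_algebraMap_add_algebraMap_mul_eq_zero W
    (p := -C c) (s := 1) ?_).2
  rw [map_neg, map_one, one_mul, h, IsScalarTower.algebraMap_apply F F[X], Polynomial.algebraMap_eq]
  simp

theorem valuation_mk_X_sq_eq (hx : 1 < ν (ι 𝔁)) : ν (ι 𝔂) ^ 2 = ν (ι 𝔁) ^ 3 := by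
  set x := ν (ι 𝔁)
  set L := aeval (ι 𝔁) (C W.a₁ * X + C W.a₃)
  have hrel := congrArg ι (CoordinateRing.mk_X_mul_eq W)
  rw [map_mul, map_add, algebraMap_algebraMap_eq_aeval (C W.a₁ * X + C W.a₃),
    algebraMap_algebraMap_eq_aeval (X ^ 3 + C W.a₂ * X ^ 2 + C W.a₄ * X + C W.a₆)] at hrel
  have hcubic : ν (ι 𝔂) * ν (ι 𝔂 + L) = x ^ 3 := by
    have hdeg : (X ^ 3 + C W.a₂ * X ^ 2 + C W.a₄ * X + C W.a₆ : F[X]).natDegree = 3 := by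
      compute_degree!
    rw [← map_mul, hrel, valuation_aeval_eq_valuation_X_pow_natDegree_of_one_lt_valuation_X _ hx
      (by rintro h; simp [h] at hdeg), hdeg]
  have hL : ν L ≤ x := by
    rcases eq_or_ne (C W.a₁ * X + C W.a₃ : F[X]) 0 with h | h
    · simp only [L, h, map_zero, zero_le]
    rw [valuation_aeval_eq_valuation_X_pow_natDegree_of_one_lt_valuation_X _ hx h]
    exact (pow_le_pow_right₀ hx.le (by compute_degree)).trans_eq (pow_one x)
  rcases lt_or_ge x (ν (ι 𝔂)) with h | h
  · rwa [Valuation.map_add_eq_of_lt_left _ (hL.trans_lt h), ← sq] at hcubic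
  · -- otherwise `ν (ι 𝔂 + L) ≤ x` and the left side of the curve equation is too small
    have hle := mul_le_mul' h ((ν.map_add _ _).trans (max_le h hL))
    rw [hcubic] at hle
    refine absurd hle (not_le.2 ?_)
    calc x * x = x ^ 2 * 1 := by rw [mul_one, sq]
      _ < x ^ 2 * x := mul_lt_mul_of_pos_left hx (pow_pos (zero_lt_one.trans hx) 2)
      _ = x ^ 3 := (pow_succ x 2).symm

theorem exists_valuation_eq_exp_mul {t : ℤ} (ht : 0 < t) (hx : ν (ι 𝔁) = exp (2 * t))
    (hy : ν (ι 𝔂) = exp (3 * t)) {a : W.CoordinateRing} (ha : a ≠ 0) :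
    ∃ k : ℤ, ν (ι a) = exp (t * k) := by
  have hx1 : 1 < ν (ι 𝔁) := by rw [hx, ← exp_zero, exp_lt_exp]; omega
  have hpoly (p : F[X]) (hp : p ≠ 0) :
      ν (ι (algebraMap F[X] _ p)) = exp (t * (2 * p.natDegree)) := by
    rw [algebraMap_algebraMap_eq_aeval,
      valuation_aeval_eq_valuation_X_pow_natDegree_of_one_lt_valuation_X _ hx1 hp, hx,
      ← exp_nsmul, nsmul_eq_mul]
    ring_nf
  have hpolyY (s : F[X]) (hs : s ≠ 0) :
      ν (ι (algebraMap F[X] _ s * 𝔂)) = exp (t * (2 * s.natDegree + 3)) := by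
    rw [map_mul, map_mul, hpoly s hs, hy, ← exp_add]
    ring_nf
  obtain ⟨p, s, rfl⟩ := CoordinateRing.exists_eq_algebraMap_add_algebraMap_mul W a
  rw [map_add]
  rcases eq_or_ne p 0 with rfl | hp
  · have hs : s ≠ 0 := by
      rintro rfl
      simp at ha
    exact ⟨_, by rw [map_zero, map_zero, zero_add, hpolyY s hs]⟩
  rcases eq_or_ne s 0 with rfl | hs
  · exact ⟨_, by rw [map_zero, zero_mul, map_zero, add_zero, hpoly p hp]⟩
  have hne : ν (ι (algebraMap F[X] _ p)) ≠ ν (ι (algebraMap F[X] _ s * 𝔂)) := by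
    rw [hpoly p hp, hpolyY s hs, Ne, exp_inj]
    intro h
    have := mul_left_cancel₀ ht.ne' h
    omega
  rw [Valuation.map_add_of_distinct_val _ hne, hpoly p hp, hpolyY s hs]
  rcases max_choice (exp (t * (2 * p.natDegree))) (exp (t * (2 * s.natDegree + 3))) with h | h <;>
    exact ⟨_, h⟩

theorem valuation_eq_exp_two_and_exp_three
    (hneg : ∀ a : W.CoordinateRing, (∀ c : F, a ≠ algebraMap F _ c) → 1 < ν (ι a))
    (hsurj : Function.Surjective ν) :
    ν (ι 𝔁) = exp 2 ∧ ν (ι 𝔂) = exp 3 := by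
  have hx1 : 1 < ν (ι 𝔁) := hneg _ algebraMap_X_ne_algebraMap
  obtain ⟨t, ht, hx, hy⟩ :=
    exists_eq_exp_two_mul_and_eq_exp_three_mul hx1 (valuation_mk_X_sq_eq hx1)
  suffices t = 1 by
    subst this
    exact ⟨hx, hy⟩
  -- the values of `A` all lie in `exp (t ℤ)`, but `ν` takes the value `exp 1`
  obtain ⟨z, hz⟩ := hsurj (exp 1)
  obtain ⟨a, b, hb, rfl⟩ := IsFractionRing.div_surjective W.CoordinateRing z
  have ha : a ≠ 0 := by
    rintro rfl
    rw [map_zero, zero_div, map_zero] at hz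
    exact exp_ne_zero hz.symm
  obtain ⟨k, hk⟩ := exists_valuation_eq_exp_mul ht hx hy ha
  obtain ⟨l, hl⟩ := exists_valuation_eq_exp_mul ht hx hy (nonZeroDivisors.ne_zero hb)
  rw [map_div₀, hk, hl, ← exp_sub, exp_inj, ← mul_sub] at hz
  exact Int.eq_one_of_mul_eq_one_right ht.le hz

omit [Finite F] in
theorem exists_valuation_eq_exp (hx : ν (ι 𝔁) = exp 2) (hy : ν (ι 𝔂) = exp 3) {k : ℕ}
    (hk : 2 ≤ k) : ∃ a : W.CoordinateRing, ν (ι a) = exp (k : ℤ) := by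
  obtain ⟨j, rfl | rfl⟩ := Nat.even_or_odd' k
  · refine ⟨𝔁 ^ j, ?_⟩
    rw [map_pow, map_pow, hx, ← exp_nsmul, nsmul_eq_mul]
    push_cast
    ring_nf
  · obtain ⟨i, rfl⟩ : ∃ i, j = i + 1 := ⟨j - 1, by omega⟩
    refine ⟨𝔁 ^ i * 𝔂, ?_⟩
    rw [map_mul, map_mul, map_pow, map_pow, hx, hy, ← exp_nsmul, ← exp_add, nsmul_eq_mul]
    push_cast
    ring_nf

theorem one_le_valuation
    (hneg : ∀ a : W.CoordinateRing, (∀ c : F, a ≠ algebraMap F _ c) → 1 < ν (ι a))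
    {a : W.CoordinateRing} (ha : a ≠ 0) : 1 ≤ ν (ι a) := by
  by_cases h : ∃ c : F, a = algebraMap F W.CoordinateRing c
  · obtain ⟨c, rfl⟩ := h
    rw [← IsScalarTower.algebraMap_apply,
      Valuation.IsTrivialOn.eq_one c (by rintro rfl; simp at ha)]
  · exact (hneg a (not_exists.1 h)).le

theorem valuation_algebraMap_le_of_degree_lt (hx : ν (ι 𝔁) = exp 2) {p : F[X]} {n : ℕ}
    (hp : p.degree < n) : ν (ι (algebraMap F[X] _ p)) ≤ exp (2 * ((n : ℤ) - 1)) := by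
  rcases eq_or_ne p 0 with rfl | h
  · rw [map_zero, map_zero, map_zero]
    exact zero_le
  have hdeg := (natDegree_lt_iff_degree_lt h).2 hp
  rw [algebraMap_algebraMap_eq_aeval,
    valuation_aeval_eq_valuation_X_pow_natDegree_of_one_lt_valuation_X _
      (by rw [hx, ← exp_zero, exp_lt_exp]; omega) h,
    hx, ← exp_nsmul, exp_le_exp, nsmul_eq_mul]
  omega

theorem exists_finset_card_eq_valuation_le (hx : ν (ι 𝔁) = exp 2) (hy : ν (ι 𝔂) = exp 3)
    {D : ℕ} (hD : 1 ≤ D) : ∃ S : Finset W.CoordinateRing,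
      S.card = Nat.card F ^ D ∧ ∀ g ∈ S, ν (ι g) ≤ exp (D : ℤ) := by
  classical
  have := Fintype.ofFinite F
  let P (n : ℕ) (c : Fin n → F) : F[X] := (degreeLTEquiv F n).symm c
  have hPinj (n : ℕ) : Function.Injective (P n) :=
    Subtype.val_injective.comp (degreeLTEquiv F n).symm.injective
  have hPν (n : ℕ) (c : Fin n → F) :
      ν (ι (algebraMap F[X] _ (P n c))) ≤ exp (2 * ((n : ℤ) - 1)) :=
    valuation_algebraMap_le_of_degree_lt hx (mem_degreeLT.1 ((degreeLTEquiv F n).symm c).2)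
  -- polynomials `p + s y` with `deg p ≤ D / 2` and `2 deg s + 3 ≤ D`
  let Φ (c : (Fin (D / 2 + 1) → F) × (Fin (D - D / 2 - 1) → F)) : W.CoordinateRing :=
    algebraMap F[X] _ (P _ c.1) + algebraMap F[X] _ (P _ c.2) * 𝔂
  have hΦ : Function.Injective Φ := by
    rintro ⟨c, d⟩ ⟨c', d'⟩ h
    obtain ⟨h₁, h₂⟩ := CoordinateRing.eq_zero_of_algebraMap_add_algebraMap_mul_eq_zero W
      (p := P _ c - P _ c') (s := P _ d - P _ d') (by simp only [map_sub]; linear_combination h)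
    exact Prod.ext (hPinj _ (sub_eq_zero.1 h₁)) (hPinj _ (sub_eq_zero.1 h₂))
  refine ⟨Finset.univ.image Φ, ?_, ?_⟩
  · rw [Finset.card_image_of_injective _ hΦ, Finset.card_univ, Fintype.card_prod,
      Fintype.card_fun, Fintype.card_fun, Fintype.card_fin, Fintype.card_fin, ← pow_add,
      Nat.card_eq_fintype_card]
    congr 1
    omega
  · simp only [Finset.mem_image, Finset.mem_univ, true_and, forall_exists_index]
    rintro _ ⟨c, d⟩ rfl
    dsimp only [Φ]
    rw [map_add]
    refine (ν.map_add _ _).trans (max_le ((hPν _ c).trans (exp_le_exp.2 ?_)) ?_)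
    · omega
    rw [map_mul, map_mul, hy]
    calc _ ≤ exp (2 * (((D - D / 2 - 1 : ℕ) : ℤ) - 1)) * exp 3 := mul_le_mul_left (hPν _ d) _
      _ ≤ exp (D : ℤ) := by
        rw [← exp_add, exp_le_exp]
        omega

theorem exists_span_eq_top_valuation_mul_sub_le
    (hres : Nat.card (IsLocalRing.ResidueField ν.valuationSubring) = Nat.card F)
    (hsurj : Function.Surjective ν)
    (hneg : ∀ a : W.CoordinateRing, (∀ c : F, a ≠ algebraMap F _ c) → 1 < ν (ι a))
    (hrat : ∀ x y : F, ¬ W.Equation x y) (z : W.FunctionField) (n : ℕ) :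
    ∃ f g : W.CoordinateRing, g ≠ 0 ∧ Ideal.span {f, g} = ⊤ ∧ 1 ≤ ν (ι g) ∧
      ν (ι g) ≤ exp ((n : ℤ) + 3) ∧ ν (ι g * z - ι f) ≤ exp (-((n : ℤ) + 1)) := by
  obtain ⟨hx, hy⟩ := valuation_eq_exp_two_and_exp_three hneg hsurj
  have hgap (k : ℕ) (hk : 2 ≤ k) := exists_valuation_eq_exp hx hy hk
  have hpos (a : W.CoordinateRing) (ha : a ≠ 0) := one_le_valuation hneg ha
  have : IsPrincipalIdealRing W.CoordinateRing := isPrincipalIdealRing_of_isEmpty_algHom hres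
    hgap hpos ⟨fun φ ↦ hrat _ _ (CoordinateRing.equation_of_algHom W φ)⟩
  obtain ⟨S, hS, hSν⟩ := exists_finset_card_eq_valuation_le hx hy (D := n + 3) (by omega)
  obtain ⟨g₁, h₁, g₂, h₂, hne, f₀, hf₀⟩ := exists_ne_valuation_mul_sub_le hres hgap hsurj z
    (N := n + 2) (by rw [hS]; exact Nat.pow_lt_pow_right Finite.one_lt_card (by omega))
  obtain ⟨d, f, g, rfl, hdg, hspan⟩ :=
    IsBezout.exists_eq_mul_eq_mul_span_eq_top f₀ (sub_ne_zero.2 hne)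
  have hdg0 : d * g ≠ 0 := hdg ▸ sub_ne_zero.2 hne
  have hd : 1 ≤ ν (ι d) := hpos d (left_ne_zero_of_mul hdg0)
  refine ⟨f, g, right_ne_zero_of_mul hdg0, hspan, hpos g (right_ne_zero_of_mul hdg0), ?_, ?_⟩
  · calc ν (ι g) ≤ ν (ι d) * ν (ι g) := le_mul_of_one_le_left' hd
      _ = ν (ι g₁ - ι g₂) := by rw [← map_mul, ← map_mul, ← map_sub, hdg]
      _ ≤ exp ((n : ℤ) + 3) := (ν.map_sub _ _).trans (max_le (by simpa using hSν g₁ h₁)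
          (by simpa using hSν g₂ h₂))
  · calc ν (ι g * z - ι f) ≤ ν (ι d) * ν (ι g * z - ι f) := le_mul_of_one_le_left' hd
      _ = ν (ι (g₁ - g₂) * z - ι (d * f)) := by
        rw [hdg, map_mul, map_mul, mul_assoc, ← mul_sub, map_mul]
      _ ≤ exp (-((n : ℤ) + 1)) := hf₀.trans (exp_le_exp.2 (by push_cast; omega))

end WeierstrassCurve.Affine

theorem Valued.valuation_sub_coe_div_lt {K : Type*} [Field K] [Valued K ℤₘ₀]
    {α : UniformSpace.Completion K} {z f g : K} {n : ℕ}
    (hz : Valued.v (α - z) < exp (-2 * ((n : ℤ) + 1))) (hg₁ : 1 ≤ Valued.v g)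
    (hg : Valued.v g ≤ exp ((n : ℤ) + 3)) (hfg : Valued.v (g * z - f) ≤ exp (-((n : ℤ) + 1))) :
    Valued.v (α - ↑(f / g)) < exp 4 / Valued.v g ^ 2 ∧
      Valued.v (↑(f / g) - α) ≤ exp (-(n : ℤ)) := by
  have hg₀ : Valued.v g ≠ 0 := (zero_lt_one.trans_le hg₁).ne'
  obtain ⟨D, hgD⟩ : ∃ D : ℤ, Valued.v g = exp D := ⟨_, (exp_log hg₀).symm⟩
  have hD₀ : 0 ≤ D := exp_le_exp.1 (hgD ▸ hg₁)
  have hDn : D ≤ n + 3 := exp_le_exp.1 (hgD ▸ hg)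
  have hzfg : Valued.v ((z : UniformSpace.Completion K) - ↑(f / g)) ≤ exp (-((n : ℤ) + 1) - D) := by
    rw [← UniformSpace.Completion.coe_sub, Valued.valuedCompletion_apply,
      show z - f / g = (g * z - f) / g by
        rw [sub_div, mul_div_cancel_left₀ z ((Valuation.ne_zero_iff _).1 hg₀)], map_div₀, hgD,
      exp_sub, div_le_div_iff_of_pos_right exp_pos]
    exact hfg
  have hmax : Valued.v (α - ↑(f / g)) ≤
      max (Valued.v (α - z)) (Valued.v ((z : UniformSpace.Completion K) - ↑(f / g))) := by
    rw [← sub_add_sub_cancel α z]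
    exact Valued.v.map_add _ _
  have h4 : exp 4 / Valued.v g ^ 2 = exp (4 - 2 * D) := by
    rw [hgD, ← exp_nsmul, ← exp_sub, nsmul_eq_mul, Nat.cast_ofNat]
  have hswap : Valued.v ((↑(f / g) : UniformSpace.Completion K) - α) =
      Valued.v (α - ↑(f / g)) := Valuation.map_sub_swap _ _ _
  rw [h4, hswap]
  refine ⟨hmax.trans_lt (max_lt (hz.trans_le ?_) (hzfg.trans_lt ?_)),
    hmax.trans (max_le (hz.le.trans ?_) (hzfg.trans ?_))⟩ <;>
  simp only [exp_le_exp, exp_lt_exp] <;> omega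

variable (Fq : Type) [Field Fq] [Fintype Fq]

theorem neg_four_approximable_of_no_rational_point (q : ℕ) (hq : Fintype.card Fq = q)
    (W : WeierstrassCurve Fq)
    (hnosol : ∀ x y : Fq,
      y ^ 2 + W.a₁ * x * y + W.a₃ * y ≠ x ^ 3 + W.a₂ * x ^ 2 + W.a₄ * x + W.a₆)
    (ν : Valuation W.toAffine.FunctionField ℤₘ₀)
    (hsurj : Function.Surjective ν)
    (hneg : ∀ a : W.toAffine.CoordinateRing, (∀ c : Fq, a ≠ algebraMap Fq _ c) →
      1 < ν (algebraMap W.toAffine.CoordinateRing W.toAffine.FunctionField a))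
    (hres : Nat.card (IsLocalRing.ResidueField ν.valuationSubring) = q) :
    letI : Valued W.toAffine.FunctionField ℤₘ₀ := Valued.mk' ν
    letI : Valued (UniformSpace.Completion W.toAffine.FunctionField) ℤₘ₀ :=
      Valued.valuedCompletion
    ∀ α : UniformSpace.Completion W.toAffine.FunctionField,
      zabs q (Valued.v α) ≤ 1 →
      ∃ f g : ℕ → W.toAffine.CoordinateRing,
        (∀ n, g n ≠ 0 ∧
          Ideal.span {f n, g n} = (⊤ : Ideal W.toAffine.CoordinateRing) ∧
          zabs q (Valued.v (α -
            (UniformSpace.Completion.coe' (α := W.toAffine.FunctionField)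
              (algebraMap W.toAffine.CoordinateRing W.toAffine.FunctionField (f n) /
                algebraMap W.toAffine.CoordinateRing W.toAffine.FunctionField (g n))))) <
            (q : ℝ) ^ (4 : ℕ) /
              zabs q (ν (algebraMap W.toAffine.CoordinateRing W.toAffine.FunctionField
                (g n))) ^ 2) ∧
        Tendsto (fun n => UniformSpace.Completion.coe' (α := W.toAffine.FunctionField)
            (algebraMap W.toAffine.CoordinateRing W.toAffine.FunctionField (f n) /
              algebraMap W.toAffine.CoordinateRing W.toAffine.FunctionField (g n)))
          atTop (nhds α) := by
  let : Valued W.toAffine.FunctionField ℤₘ₀ := Valued.mk' ν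
  intro α _
  have hq₁ : 1 < q := hq ▸ Fintype.one_lt_card
  have key (n : ℕ) : ∃ f g : W.toAffine.CoordinateRing, g ≠ 0 ∧ Ideal.span {f, g} = ⊤ ∧
      Valued.v (α - ↑(algebraMap _ W.toAffine.FunctionField f / algebraMap _ _ g)) <
        exp 4 / ν (algebraMap _ _ g) ^ 2 ∧
      Valued.v (↑(algebraMap _ W.toAffine.FunctionField f / algebraMap _ _ g) - α) ≤
        exp (-(n : ℤ)) := by
    obtain ⟨x₀, hx₀⟩ := hsurj (exp (-2 * ((n : ℤ) + 1)))
    obtain ⟨z, hz⟩ := Valued.exists_coe_sub_lt α (x := x₀) (hx₀ ▸ exp_ne_zero)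
    obtain ⟨f, g, hg, hspan, hg₁, hgn, hfg⟩ :=
      WeierstrassCurve.Affine.exists_span_eq_top_valuation_mul_sub_le
      (hres.trans (hq.symm.trans Nat.card_eq_fintype_card.symm)) hsurj hneg
      (fun x y h ↦ hnosol x y ((WeierstrassCurve.Affine.equation_iff x y).1 h)) z n
    exact ⟨f, g, hg, hspan, Valued.valuation_sub_coe_div_lt (hx₀ ▸ hz) hg₁ hgn hfg⟩
  choose f g hfg using key
  refine ⟨f, g, fun n ↦ ⟨(hfg n).1, (hfg n).2.1, ?_⟩,
    Valued.tendsto_of_le_exp_neg fun n ↦ (hfg n).2.2.2⟩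
  calc _ < zabs q (exp 4 / ν (algebraMap _ _ (g n)) ^ 2) := zabs_strictMono hq₁ (hfg n).2.2.1
    _ = _ := by rw [zabs_div_pow (by omega), zabs_exp]; norm_cast
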